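/- The number of 0-1 strings s_1 s_2 ... s_{n-1} of length n-1 such that for no i we have s_{2i-1} = 0 and s_{2i} = 1, and for no i we have s_{2i} = 1 and s_{2i+1} = 0, equals the Fibonacci number F_n, where F_1 = 1, F_2 = 2, F_n = F_{n-1} + F_{n-2}. -/

import Mathlib

/-!
Adding the alternating string `0101…` (mod 2) flips every second bit and turns the two
forbidden patterns `01` at positions `(2i, 2i+1)` and `10` at positions `(2i+1, 2i+2)` into
the single pattern `00` at an arbitrary pair of adjacent positions. Strings of length `m`
without two adjacent zeros satisfy the Fibonacci recursion, according to whether they start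
with `1` or with `01`, so there are `fib (m + 2)` of them.
-/

def NoAdjacentZeros {m : ℕ} (t : Fin m → Fin 2) : Prop :=
  ∀ (j : ℕ) (h : j + 1 < m), ¬(t ⟨j, by omega⟩ = 0 ∧ t ⟨j + 1, h⟩ = 0)

namespace NoAdjacentZeros

variable {m : ℕ}

theorem of_le_one (hm : m ≤ 1) (t : Fin m → Fin 2) : NoAdjacentZeros t :=
  fun _ _ => by omega

theorem tail {t : Fin (m + 1) → Fin 2} (ht : NoAdjacentZeros t) :
    NoAdjacentZeros (Fin.tail t) :=
  fun j _ => ht (j + 1) (by omega)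

theorem cons_one {u : Fin m → Fin 2} (hu : NoAdjacentZeros u) :
    NoAdjacentZeros (Fin.cons 1 u : Fin (m + 1) → Fin 2) := by
  rintro (_ | j) h
  · simp
  · exact hu j (by omega)

theorem cons_zero {u : Fin (m + 1) → Fin 2} (hu : NoAdjacentZeros u) (h0 : u 0 = 1) :
    NoAdjacentZeros (Fin.cons 0 u : Fin (m + 2) → Fin 2) := by
  rintro (_ | j) h
  · show ¬((0 : Fin 2) = 0 ∧ u 0 = 0)
    rw [h0]
    decide
  · exact hu j (by omega)

theorem apply_one_eq_one {t : Fin (m + 2) → Fin 2} (ht : NoAdjacentZeros t) (h0 : t 0 = 0) :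
    t 1 = 1 :=
  Fin.eq_one_of_ne_zero _ fun h1 => ht 0 (by omega) ⟨h0, h1⟩

end NoAdjacentZeros

def noAdjacentZerosEquivSum (m : ℕ) :
    {t : Fin (m + 2) → Fin 2 // NoAdjacentZeros t} ≃
      {u : Fin (m + 1) → Fin 2 // NoAdjacentZeros u} ⊕ {v : Fin m → Fin 2 // NoAdjacentZeros v}
    where
  toFun t :=
    if t.1 0 = 1 then .inl ⟨Fin.tail t.1, t.2.tail⟩
    else .inr ⟨Fin.tail (Fin.tail t.1), t.2.tail.tail⟩
  invFun
    | .inl u => ⟨Fin.cons 1 u.1, u.2.cons_one⟩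
    | .inr v => ⟨Fin.cons 0 (Fin.cons 1 v.1), v.2.cons_one.cons_zero (Fin.cons_zero _ _)⟩
  left_inv := by
    rintro ⟨t, ht⟩
    refine Subtype.ext ?_
    by_cases h0 : t 0 = 1
    · simp only [h0, if_true]
      conv_rhs => rw [← Fin.cons_self_tail t, h0]
    · have h0' : t 0 = 0 := by omega
      have h1 : Fin.tail t 0 = 1 := ht.apply_one_eq_one h0'
      simp only [h0, if_false]
      conv_rhs => rw [← Fin.cons_self_tail t, ← Fin.cons_self_tail (Fin.tail t), h0', h1]
  right_inv := by
    rintro (⟨u, hu⟩ | ⟨v, hv⟩) <;> simp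

theorem card_noAdjacentZeros (m : ℕ) :
    Nat.card {t : Fin m → Fin 2 // NoAdjacentZeros t} = Nat.fib (m + 2) := by
  induction m using Nat.twoStepInduction with
  | zero | one =>
    rw [Nat.card_congr (Equiv.subtypeUnivEquiv (NoAdjacentZeros.of_le_one (by omega))),
      Nat.card_fun]
    simp [Nat.fib_add_two]
  | more m ih₀ ih₁ =>
    rw [Nat.card_congr (noAdjacentZerosEquivSum m), Nat.card_sum, ih₁, ih₀, add_comm,
      ← Nat.fib_add_two]

def IsFib2String {m : ℕ} (s : Fin m → Fin 2) : Prop :=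
  (∀ (i : ℕ) (h : 2 * i + 1 < m), ¬(s ⟨2 * i, by omega⟩ = 0 ∧ s ⟨2 * i + 1, h⟩ = 1)) ∧
    (∀ (i : ℕ) (h : 2 * i + 2 < m), ¬(s ⟨2 * i + 1, by omega⟩ = 1 ∧ s ⟨2 * i + 2, h⟩ = 0))

def alternating (m : ℕ) : Fin m → Fin 2 := fun j => Fin.ofNat 2 j

theorem fin_two_add_one_eq_zero_iff {x : Fin 2} : x + 1 = 0 ↔ x = 1 := by
  revert x; decide

theorem isFib2String_iff_noAdjacentZeros_add_alternating {m : ℕ} (s : Fin m → Fin 2) :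
    IsFib2String s ↔ NoAdjacentZeros (s + alternating m) := by
  simp only [IsFib2String, NoAdjacentZeros, Pi.add_apply, alternating, Fin.ofNat]
  refine ⟨fun ⟨h01, h10⟩ j hj => ?_, fun h => ⟨fun i hi => ?_, fun i hi => ?_⟩⟩
  · obtain ⟨i, rfl | rfl⟩ := Nat.even_or_odd' j
    · simpa [Nat.add_mod, fin_two_add_one_eq_zero_iff] using h01 i hj
    · simpa [Nat.add_mod, fin_two_add_one_eq_zero_iff] using h10 i hj
  · simpa [Nat.add_mod, fin_two_add_one_eq_zero_iff] using h (2 * i) hi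
  · simpa [Nat.add_mod, fin_two_add_one_eq_zero_iff] using h (2 * i + 1) hi

theorem card_isFib2String (m : ℕ) :
    Nat.card {s : Fin m → Fin 2 // IsFib2String s} = Nat.fib (m + 2) := by
  rw [← card_noAdjacentZeros]
  exact Nat.card_congr <| (Equiv.addRight (alternating m)).subtypeEquiv
    isFib2String_iff_noAdjacentZeros_add_alternating

theorem stmt_1 (n : ℕ) (hn : 1 ≤ n) :
    Nat.card {s : Fin (n - 1) → Fin 2 //
      (∀ (i : ℕ) (h : 2 * i + 1 < n - 1),
          ¬(s ⟨2 * i, by omega⟩ = 0 ∧ s ⟨2 * i + 1, h⟩ = 1)) ∧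
      (∀ (i : ℕ) (h : 2 * i + 2 < n - 1),
          ¬(s ⟨2 * i + 1, by omega⟩ = 1 ∧ s ⟨2 * i + 2, h⟩ = 0))} =
    Nat.fib (n + 1) := by
  obtain ⟨m, rfl⟩ : ∃ m, n = m + 1 := ⟨n - 1, by omega⟩
  exact card_isFib2String m
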